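/- arXiv:math/0103091 — 2 statements merged into one kernel-verified Lean document; each statement's English description precedes it below -/
import Mathlib

section
/- Let m be squarefree of the form 2*q with q odd, and let d be an idempotent of Z/mZ whose natural representative in [0,m) is odd. Then d + 1 is twice a unit: there exists a unit u of Z/mZ with d + 1 = 2*u. -/
/-- For squarefree `m = 2 * q` with `q` odd: if `d` is an idempotent of `ZMod m`
whose natural representative is odd, then `d + 1 = 2 * u` for some unit `u`. -/
theorem odd_idempotent_succ_twice_unit (m q : ℕ) [NeZero m] (hm : m = 2 * q)
    (hq : Odd q) (hsf : Squarefree m) (d : ZMod m) (hd : d ^ 2 = d)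
    (hdval : Odd d.val) : ∃ u : (ZMod m)ˣ, d + 1 = 2 * (u : ZMod m) := by
  obtain ⟨k, hk⟩ := hdval
  set t : ℕ := k + 1 with ht
  have ht2 : 2 * t = d.val + 1 := by omega
  have hcastd : ((d.val : ℕ) : ZMod m) = d := ZMod.natCast_rightInverse d
  have hmod : d.val ^ 2 ≡ d.val [MOD m] := by
    rw [← ZMod.natCast_eq_natCast_iff]
    push_cast
    rw [hcastd, hd]
  have hdvd : m ∣ d.val ^ 2 - d.val :=
    (Nat.modEq_iff_dvd' (Nat.le_self_pow two_ne_zero _)).mp hmod.symm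
  -- t is coprime to q
  have hcopq : Nat.Coprime t q := by
    by_contra h
    obtain ⟨p, hp, hpd⟩ := Nat.exists_prime_and_dvd h
    have hpt : p ∣ t := hpd.trans (Nat.gcd_dvd_left _ _)
    have hpq : p ∣ q := hpd.trans (Nat.gcd_dvd_right _ _)
    have hp2 : p ≠ 2 := by
      rintro rfl
      obtain ⟨j, hj⟩ := hq
      omega
    have hpm : p ∣ m := hm ▸ hpq.mul_left 2
    have hfac : d.val ^ 2 - d.val = d.val * (d.val - 1) := by
      rw [Nat.mul_sub, Nat.mul_one, sq]
    have hpdd : p ∣ d.val * (d.val - 1) := hfac ▸ hpm.trans hdvd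
    have hpd1 : p ∣ d.val + 1 := ht2 ▸ hpt.mul_left 2
    rcases hp.dvd_mul.mp hpdd with h1 | h1
    · have h2 : p ∣ (d.val + 1) - d.val := Nat.dvd_sub hpd1 h1
      have h3 : (d.val + 1) - d.val = 1 := by omega
      have := Nat.le_of_dvd one_pos (h3 ▸ h2)
      exact absurd this (by have := hp.two_le; omega)
    · have h2 : p ∣ (d.val + 1) - (d.val - 1) := Nat.dvd_sub hpd1 h1
      have h3 : (d.val + 1) - (d.val - 1) = 2 := by omega
      have := (Nat.prime_dvd_prime_iff_eq hp Nat.prime_two).mp (h3 ▸ h2)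
      exact hp2 this
  -- choose the odd representative among t, t + q
  set u' : ℕ := if Even t then t + q else t with hu'
  have hu'odd : Odd u' := by
    by_cases he : Even t
    · simp only [hu', if_pos he]
      exact he.add_odd hq
    · simp only [hu', if_neg he]
      exact Nat.odd_iff.mpr (Nat.not_even_iff.mp he)
  have hu'q : Nat.Coprime u' q := by
    by_cases he : Even t
    · simpa [hu', if_pos he] using (Nat.coprime_add_self_right).mpr hcopq
    · simpa [hu', if_neg he] using hcopq
  have hu'm : Nat.Coprime u' m := by
    rw [hm]
    exact Nat.Coprime.mul_right (Nat.coprime_two_right.mpr hu'odd) hu'q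
  have hunit : IsUnit ((u' : ℕ) : ZMod m) := (ZMod.isUnit_iff_coprime u' m).mpr hu'm
  obtain ⟨u, hu⟩ := hunit
  refine ⟨u, ?_⟩
  rw [hu]
  have h2u : (2 * u' : ℕ) = d.val + 1 ∨ (2 * u' : ℕ) = d.val + 1 + m := by
    by_cases he : Even t
    · right; simp only [hu', if_pos he]; omega
    · left; simp only [hu', if_neg he]; omega
  rcases h2u with h | h
  · have := congrArg (fun n : ℕ => (n : ZMod m)) h
    push_cast at this
    rw [hcastd] at this
    linear_combination -this
  · have := congrArg (fun n : ℕ => (n : ZMod m)) h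
    push_cast at this
    rw [hcastd, ZMod.natCast_self] at this
    linear_combination -this
end

section
/- Let m be the product of the first k primes with k ≥ 1, and let G be the group of units of Z/mZ. Then every even residue class in Z/mZ is a sum of two units, i.e., for every n in Z/mZ there exist units u, v with 2*n = u + v. -/
def GoldbachRes (m : ℕ) : Prop :=
  ∀ n : ZMod m, ∃ u v : ZMod m, IsUnit u ∧ IsUnit v ∧ 2 * n = u + v

lemma goldbachRes_two : GoldbachRes 2 := by
  intro n
  refine ⟨1, 1, isUnit_one, isUnit_one, ?_⟩
  have h2 : (2 : ZMod 2) = 0 := rfl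
  rw [h2, zero_mul]
  decide

lemma goldbachRes_odd_prime (p : ℕ) (hp : p.Prime) (hodd : p ≠ 2) : GoldbachRes p := by
  haveI : Fact p.Prime := ⟨hp⟩
  intro n
  by_cases h : 2 * n - 1 = 0
  · refine ⟨2, -1, ?_, ?_, ?_⟩
    · refine (isUnit_iff_ne_zero).2 ?_
      intro h2
      have h2' : ((2 : ℕ) : ZMod p) = 0 := by push_cast; exact h2
      have hd := (ZMod.natCast_eq_zero_iff 2 p).1 h2'
      exact hodd ((Nat.prime_dvd_prime_iff_eq hp Nat.prime_two).1 hd)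
    · exact (isUnit_iff_ne_zero).2 (by simp)
    · have h1 : 2 * n = 1 := by linear_combination h
      rw [h1]; ring
  · exact ⟨1, 2 * n - 1, isUnit_one, (isUnit_iff_ne_zero).2 h, by ring⟩

lemma isUnit_pair {M N : Type*} [Monoid M] [Monoid N] {a : M} {b : N}
    (ha : IsUnit a) (hb : IsUnit b) : IsUnit (a, b) := by
  obtain ⟨u, rfl⟩ := ha; obtain ⟨v, rfl⟩ := hb
  exact ⟨⟨(↑u, ↑v), (↑u⁻¹, ↑v⁻¹), by simp [Prod.ext_iff], by simp [Prod.ext_iff]⟩, rfl⟩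

lemma goldbachRes_mul (a b : ℕ) (hab : Nat.Coprime a b)
    (ha : GoldbachRes a) (hb : GoldbachRes b) : GoldbachRes (a * b) := by
  intro n
  let e := ZMod.chineseRemainder hab
  obtain ⟨u1, v1, hu1, hv1, h1⟩ := ha (e n).1
  obtain ⟨u2, v2, hu2, hv2, h2⟩ := hb (e n).2
  refine ⟨e.symm (u1, u2), e.symm (v1, v2), ?_, ?_, ?_⟩
  · exact (e.symm : ZMod a × ZMod b →+* ZMod (a*b)).isUnit_map (isUnit_pair hu1 hu2)
  · exact (e.symm : ZMod a × ZMod b →+* ZMod (a*b)).isUnit_map (isUnit_pair hv1 hv2)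
  · rw [← map_add]
    have key : (u1, u2) + (v1, v2) = ((2 : ZMod a) * (e n).1, (2 : ZMod b) * (e n).2) := by
      rw [Prod.mk_add_mk, ← h1, ← h2]
    rw [key]
    have key2 : ((2 : ZMod a) * (e n).1, (2 : ZMod b) * (e n).2) = e (2 * n) := by
      rw [two_mul, two_mul, two_mul, map_add]
      rfl
    rw [key2, RingEquiv.symm_apply_apply]

lemma nth_prime_mono : StrictMono (Nat.nth Nat.Prime) :=
  Nat.nth_strictMono Nat.infinite_setOf_prime

lemma goldbachRes_prod (k : ℕ) (hk : 1 ≤ k) :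
    GoldbachRes (∏ i ∈ Finset.range k, Nat.nth Nat.Prime i) := by
  induction k with
  | zero => omega
  | succ k ih =>
    rcases Nat.eq_or_lt_of_le hk with h | h
    · have hz : k = 0 := by omega
      subst hz
      simpa [Nat.nth_prime_zero_eq_two] using goldbachRes_two
    · have hk' : 1 ≤ k := by omega
      rw [Finset.prod_range_succ]
      apply goldbachRes_mul
      · apply Nat.Coprime.prod_left
        intro i hi
        refine (Nat.coprime_primes (Nat.prime_nth_prime i) (Nat.prime_nth_prime k)).2 ?_
        exact fun h => absurd (nth_prime_mono.injective h) (by simp at hi; omega)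
      · exact ih hk'
      · apply goldbachRes_odd_prime _ (Nat.prime_nth_prime k)
        have h0 : Nat.nth Nat.Prime 0 = 2 := Nat.nth_prime_zero_eq_two
        have := nth_prime_mono (show 0 < k by omega)
        omega

/-- Goldbach for residues: with `m` the product of the first `k` primes (`k ≥ 1`),
every even residue of `ZMod m` is a sum of two units. -/
theorem goldbach_for_residues (k : ℕ) (hk : 1 ≤ k) (m : ℕ)
    (hm : m = ∏ i ∈ Finset.range k, Nat.nth Nat.Prime i) :
    ∀ n : ZMod m, ∃ u v : ZMod m, IsUnit u ∧ IsUnit v ∧ 2 * n = u + v := by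
  subst hm
  exact goldbachRes_prod k hk
end
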